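/- Let G = (V,E) be a finite simple graph, α ∈ ℝ, and suppose the random permutation model has cycle length bounded by an integer-valued random variable ξ on (V,E). Let (ξ_n)_{n∈ℕ} be independent copies of ξ. Then for every A ⊆ V and every ℓ ∈ ℕ, P_V( |Or(A)| ≥ ℓ ) ≤ P( Σ_{i=1}^{|A|} ξ_i ≥ ℓ ), where Or(A) = Or_π(A) is the orbit of A under the random permutation π. -/

import Mathlib

open scoped Classical BigOperators

noncomputable section

namespace SRP

variable {V : Type*} [Fintype V] [DecidableEq V]

/-- A spatial (graph) permutation on the subgraph induced by `U`:
a permutation of `V` fixing the complement of `U` pointwise and moving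
every point to itself or to one of its neighbours. -/
def IsGPerm (G : SimpleGraph V) (U : Finset V) (π : Equiv.Perm V) : Prop :=
  (∀ x ∉ U, π x = x) ∧ ∀ x : V, π x = x ∨ G.Adj x (π x)

/-- The energy `H(π) = Σ_x 1{π x ≠ x}`. -/
def en (π : Equiv.Perm V) : ℕ := (Finset.univ.filter fun x => π x ≠ x).card

/-- The Gibbs weight `exp(-α H(π))`. -/
def wt (α : ℝ) (π : Equiv.Perm V) : ℝ := Real.exp (-α * en π)

/-- The partition function `Z(U)` of the subgraph induced by `U`. -/
def Z (G : SimpleGraph V) (α : ℝ) (U : Finset V) : ℝ :=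
  ∑ π : Equiv.Perm V, if IsGPerm G U π then wt α π else 0

/-- Gibbs-weighted sum of `f` over the permutations on `U`. -/
def gsum (G : SimpleGraph V) (α : ℝ) (U : Finset V) (f : Equiv.Perm V → ℝ) : ℝ :=
  ∑ π : Equiv.Perm V, if IsGPerm G U π then wt α π * f π else 0

/-- The Gibbs expectation `E_U(f)`. -/
def EU (G : SimpleGraph V) (α : ℝ) (U : Finset V) (f : Equiv.Perm V → ℝ) : ℝ :=
  gsum G α U f / Z G α U

/-- The Gibbs probability `P_U(S)`. -/
def PU (G : SimpleGraph V) (α : ℝ) (U : Finset V) (S : Equiv.Perm V → Prop) : ℝ :=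
  EU G α U fun π => if S π then 1 else 0

/-- Conditional expectation `E_U(f | ev)` given an event. -/
def condE (G : SimpleGraph V) (α : ℝ) (U : Finset V)
    (f : Equiv.Perm V → ℝ) (ev : Equiv.Perm V → Prop) : ℝ :=
  gsum G α U (fun π => if ev π then f π else 0) /
    gsum G α U (fun π => if ev π then 1 else 0)

/-- Conditional probability `P_U(S | ev)`. -/
def condP (G : SimpleGraph V) (α : ℝ) (U : Finset V)
    (S ev : Equiv.Perm V → Prop) : ℝ :=
  condE G α U (fun π => if S π then 1 else 0) ev

/-- The orbit `Or_π(A) = {π^j x : x ∈ A, j ∈ ℕ}`. -/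
def orb (π : Equiv.Perm V) (A : Finset V) : Finset V :=
  Finset.univ.filter fun y => ∃ x ∈ A, ∃ i : ℕ, (⇑π)^[i] x = y

/-- The vertex set of the cycle of `π` through `z`. -/
def cyc (π : Equiv.Perm V) (z : V) : Finset V := orb π {z}

/-- The number of edges `‖γ_z‖` of the cycle of `π` through `z`. -/
def cycEdges (π : Equiv.Perm V) (z : V) : ℕ :=
  if π z = z then 0 else (cyc π z).card

/-- `f` is `F_A`-measurable: it only depends on `π x` and `π⁻¹ x` for `x ∈ A`. -/
def MeasOn (A : Finset V) (f : Equiv.Perm V → ℝ) : Prop :=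
  ∀ π π' : Equiv.Perm V,
    (∀ x ∈ A, π x = π' x ∧ π.symm x = π'.symm x) → f π = f π'

/-- An event is `F_A`-measurable. -/
def EvMeasOn (A : Finset V) (ev : Equiv.Perm V → Prop) : Prop :=
  ∀ π π' : Equiv.Perm V,
    (∀ x ∈ A, π x = π' x ∧ π.symm x = π'.symm x) → (ev π ↔ ev π')

end SRP

namespace SRP

open MeasureTheory ProbabilityTheory

variable {V : Type*} [Fintype V] [DecidableEq V]
variable {G : SimpleGraph V} {α : ℝ} {U : Finset V}
set_option linter.unusedSectionVars false

lemma isGPerm_one (G : SimpleGraph V) (U : Finset V) : IsGPerm G U (1 : Equiv.Perm V) :=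
  ⟨fun _ _ => rfl, fun _ => Or.inl rfl⟩

lemma wt_pos (α : ℝ) (π : Equiv.Perm V) : 0 < wt α π := Real.exp_pos _

lemma Z_pos (G : SimpleGraph V) (α : ℝ) (U : Finset V) : 0 < Z G α U := by
  have h1 : wt α (1 : Equiv.Perm V) ≤ Z G α U := by
    have := Finset.single_le_sum
      (f := fun π : Equiv.Perm V => if IsGPerm G U π then wt α π else 0)
      (fun π _ => by by_cases h : IsGPerm G U π <;> simp [h, (wt_pos α π).le])
      (Finset.mem_univ (1 : Equiv.Perm V))
    simpa [Z, isGPerm_one] using this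
  exact lt_of_lt_of_le (wt_pos α 1) h1

lemma gsum_congr {f g : Equiv.Perm V → ℝ} (h : ∀ π, IsGPerm G U π → f π = g π) :
    gsum G α U f = gsum G α U g := by
  unfold gsum
  refine Finset.sum_congr rfl fun π _ => ?_
  by_cases hπ : IsGPerm G U π <;> simp [hπ]
  exact Or.inl (h π hπ)

lemma gsum_nonneg {f : Equiv.Perm V → ℝ} (hf : ∀ π, IsGPerm G U π → 0 ≤ f π) :
    0 ≤ gsum G α U f :=
  Finset.sum_nonneg fun π _ => by
    by_cases h : IsGPerm G U π
    · simp only [h, if_true]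
      exact mul_nonneg (wt_pos α π).le (hf π h)
    · simp [h]

lemma gsum_mono {f g : Equiv.Perm V → ℝ} (h : ∀ π, IsGPerm G U π → f π ≤ g π) :
    gsum G α U f ≤ gsum G α U g := by
  unfold gsum
  refine Finset.sum_le_sum fun π _ => ?_
  by_cases hπ : IsGPerm G U π
  · simp only [hπ, if_true]
    exact mul_le_mul_of_nonneg_left (h π hπ) (wt_pos α π).le
  · simp [hπ]

lemma gsum_one : gsum G α U (fun _ => 1) = Z G α U := by
  unfold gsum Z
  refine Finset.sum_congr rfl fun π _ => ?_
  by_cases hπ : IsGPerm G U π <;> simp [hπ]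

lemma gsum_finset_sum {ι : Type*} (s : Finset ι) (f : ι → Equiv.Perm V → ℝ) :
    gsum G α U (fun π => ∑ k ∈ s, f k π) = ∑ k ∈ s, gsum G α U (f k) := by
  unfold gsum
  rw [Finset.sum_comm]
  refine Finset.sum_congr rfl fun π _ => ?_
  by_cases hπ : IsGPerm G U π <;> simp [hπ, Finset.mul_sum]

lemma PU_nonneg (S : Equiv.Perm V → Prop) : 0 ≤ PU G α U S := by
  unfold PU EU
  exact div_nonneg (gsum_nonneg fun π _ => by split <;> norm_num) (Z_pos G α U).le

lemma PU_eq_one {S : Equiv.Perm V → Prop} (h : ∀ π, IsGPerm G U π → S π) :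
    PU G α U S = 1 := by
  unfold PU EU
  rw [gsum_congr (g := fun _ => 1) (fun π hπ => by simp [h π hπ]), gsum_one]
  exact div_self (Z_pos G α U).ne'

lemma PU_eq_zero {S : Equiv.Perm V → Prop} (h : ∀ π, IsGPerm G U π → ¬ S π) :
    PU G α U S = 0 := by
  unfold PU EU
  rw [gsum_congr (g := fun _ => 0) (fun π hπ => by simp [h π hπ])]
  have : gsum G α U (fun _ => (0:ℝ)) = 0 := by
    unfold gsum; refine Finset.sum_eq_zero fun π _ => by split <;> simp
  simp [this]

lemma PU_mono {S T : Equiv.Perm V → Prop} (h : ∀ π, IsGPerm G U π → S π → T π) :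
    PU G α U S ≤ PU G α U T := by
  unfold PU EU
  refine (div_le_div_iff_of_pos_right (Z_pos G α U)).2 (gsum_mono fun π hπ => ?_)
  by_cases hS : S π
  · simp [hS, h π hπ hS]
  · simp only [hS, if_false]
    split <;> norm_num



lemma mem_orb {π : Equiv.Perm V} {A : Finset V} {y : V} :
    y ∈ orb π A ↔ ∃ x ∈ A, ∃ i : ℕ, (⇑π)^[i] x = y := by
  simp [orb]

lemma mem_cyc_iter {π : Equiv.Perm V} {x y : V} :
    y ∈ cyc π x ↔ ∃ i : ℕ, (⇑π)^[i] x = y := by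
  simp [cyc, mem_orb]

lemma mem_cyc {π : Equiv.Perm V} {x y : V} :
    y ∈ cyc π x ↔ π.SameCycle x y := by
  rw [mem_cyc_iter]
  constructor
  · rintro ⟨i, rfl⟩
    exact ⟨(i : ℤ), by rw [zpow_natCast, Equiv.Perm.coe_pow]⟩
  · intro h
    obtain ⟨i, _, _, hi⟩ := h.exists_pow_eq''
    exact ⟨i, by rw [← Equiv.Perm.coe_pow]; exact hi⟩

lemma mem_cyc_self (π : Equiv.Perm V) (x : V) : x ∈ cyc π x :=
  mem_cyc.2 (Equiv.Perm.SameCycle.refl π x)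

lemma one_le_card_cyc (π : Equiv.Perm V) (x : V) : 1 ≤ (cyc π x).card :=
  Finset.card_pos.2 ⟨x, mem_cyc_self π x⟩

lemma apply_mem_cyc {π : Equiv.Perm V} {x y : V} : π y ∈ cyc π x ↔ y ∈ cyc π x := by
  simp [mem_cyc, Equiv.Perm.sameCycle_apply_right]

lemma mem_of_fix_outside {π : Equiv.Perm V} {D : Finset V}
    (h : ∀ y ∉ D, π y = y) {y : V} : π y ∈ D ↔ y ∈ D := by
  constructor
  · intro hy
    by_contra hn
    rw [h y hn] at hy; exact hn hy
  · intro hy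
    by_contra hn
    have h2 : π y = y := π.injective (h _ hn)
    exact hn (by rw [h2]; exact hy)

lemma iterate_mem {π : Equiv.Perm V} {D : Finset V} (hD : ∀ y ∈ D, π y ∈ D)
    {y : V} (hy : y ∈ D) (i : ℕ) : (⇑π)^[i] y ∈ D := by
  induction i with
  | zero => simpa
  | succ n ih => rw [Function.iterate_succ_apply']; exact hD _ ih

lemma orb_subset {π : Equiv.Perm V} {D A : Finset V} (hD : ∀ y ∈ D, π y ∈ D)
    (hA : A ⊆ D) : orb π A ⊆ D := by
  intro y hy
  obtain ⟨a, ha, i, rfl⟩ := mem_orb.1 hy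
  exact iterate_mem hD (hA ha) i

lemma cyc_subset {π : Equiv.Perm V} {x : V} (hπ : IsGPerm G U π) (hx : x ∈ U) :
    cyc π x ⊆ U :=
  orb_subset (fun y hy => (mem_of_fix_outside hπ.1).2 hy)
    (Finset.singleton_subset_iff.2 hx)

lemma iterate_agree {π ρ : Equiv.Perm V} {D : Finset V} (hD : ∀ y ∈ D, ρ y ∈ D)
    (hagree : ∀ y ∈ D, π y = ρ y) {x : V} (hx : x ∈ D) (i : ℕ) :
    (⇑π)^[i] x = (⇑ρ)^[i] x := by
  induction i with
  | zero => rfl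
  | succ n ih =>
      rw [Function.iterate_succ_apply', Function.iterate_succ_apply', ih,
        hagree _ (iterate_mem hD hx n)]

lemma cyc_eq_cyc {π ρ : Equiv.Perm V} {x : V}
    (h : ∀ i : ℕ, (⇑π)^[i] x = (⇑ρ)^[i] x) : cyc π x = cyc ρ x := by
  ext y
  rw [mem_cyc_iter, mem_cyc_iter]
  constructor <;> rintro ⟨i, rfl⟩
  · exact ⟨i, (h i).symm⟩
  · exact ⟨i, h i⟩

section Pair

variable {σ τ : Equiv.Perm V} {x : V}

lemma tau_out (hτfix : ∀ y ∈ cyc σ x, τ y = y) {y : V} (hy : y ∉ cyc σ x) :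
    τ y ∉ cyc σ x := by
  intro h
  have h2 : τ y = y := τ.injective (hτfix _ h)
  exact hy (h2 ▸ h)

lemma mul_apply_in (hτfix : ∀ y ∈ cyc σ x, τ y = y) {y : V} (hy : y ∈ cyc σ x) :
    (σ * τ) y = σ y := by
  simp [Equiv.Perm.mul_apply, hτfix y hy]

lemma mul_apply_out (hσfix : ∀ y ∉ cyc σ x, σ y = y) (hτfix : ∀ y ∈ cyc σ x, τ y = y)
    {y : V} (hy : y ∉ cyc σ x) : (σ * τ) y = τ y := by
  simp [Equiv.Perm.mul_apply, hσfix _ (tau_out hτfix hy)]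

lemma cyc_mul (hσfix : ∀ y ∉ cyc σ x, σ y = y) (hτfix : ∀ y ∈ cyc σ x, τ y = y) :
    cyc (σ * τ) x = cyc σ x :=
  cyc_eq_cyc fun i => iterate_agree (fun y hy => apply_mem_cyc.2 hy)
    (fun y hy => mul_apply_in hτfix hy) (mem_cyc_self σ x) i

lemma orb_mul_eq (hσfix : ∀ y ∉ cyc σ x, σ y = y) (hτfix : ∀ y ∈ cyc σ x, τ y = y)
    {A : Finset V} (hxA : x ∈ A) :
    orb (σ * τ) A = cyc σ x ∪ orb τ (A \ cyc σ x) := by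
  ext y
  rw [mem_orb, Finset.mem_union]
  constructor
  · rintro ⟨a, ha, i, rfl⟩
    by_cases hc : a ∈ cyc σ x
    · left
      exact iterate_mem (fun z hz => by
        rw [mul_apply_in hτfix hz]; exact apply_mem_cyc.2 hz) hc i
    · right
      rw [mem_orb]
      refine ⟨a, Finset.mem_sdiff.2 ⟨ha, hc⟩, i, ?_⟩
      rw [iterate_agree (π := σ * τ) (ρ := τ) (D := Finset.univ \ cyc σ x)
        (fun z hz => Finset.mem_sdiff.2 ⟨Finset.mem_univ _,
          tau_out hτfix (Finset.mem_sdiff.1 hz).2⟩)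
        (fun z hz => mul_apply_out hσfix hτfix (Finset.mem_sdiff.1 hz).2)
        (Finset.mem_sdiff.2 ⟨Finset.mem_univ _, hc⟩) i]
  · rintro (hy | hy)
    · rw [← cyc_mul hσfix hτfix, mem_cyc_iter] at hy
      obtain ⟨i, rfl⟩ := hy
      exact ⟨x, hxA, i, rfl⟩
    · rw [mem_orb] at hy
      obtain ⟨a, ha, i, rfl⟩ := hy
      have hc := (Finset.mem_sdiff.1 ha).2
      refine ⟨a, (Finset.mem_sdiff.1 ha).1, i, ?_⟩
      rw [iterate_agree (π := σ * τ) (ρ := τ) (D := Finset.univ \ cyc σ x)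
        (fun z hz => Finset.mem_sdiff.2 ⟨Finset.mem_univ _,
          tau_out hτfix (Finset.mem_sdiff.1 hz).2⟩)
        (fun z hz => mul_apply_out hσfix hτfix (Finset.mem_sdiff.1 hz).2)
        (Finset.mem_sdiff.2 ⟨Finset.mem_univ _, hc⟩) i]

lemma orb_disjoint (hτfix : ∀ y ∈ cyc σ x, τ y = y) {A : Finset V} :
    Disjoint (cyc σ x) (orb τ (A \ cyc σ x)) := by
  have : orb τ (A \ cyc σ x) ⊆ Finset.univ \ cyc σ x :=
    orb_subset (fun z hz => Finset.mem_sdiff.2 ⟨Finset.mem_univ _,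
        tau_out hτfix (Finset.mem_sdiff.1 hz).2⟩)
      (fun z hz => Finset.mem_sdiff.2 ⟨Finset.mem_univ _, (Finset.mem_sdiff.1 hz).2⟩)
  exact (Finset.disjoint_of_subset_right this Finset.sdiff_disjoint.symm)

lemma card_orb_mul (hσfix : ∀ y ∉ cyc σ x, σ y = y) (hτfix : ∀ y ∈ cyc σ x, τ y = y)
    {A : Finset V} (hxA : x ∈ A) :
    (orb (σ * τ) A).card = (cyc σ x).card + (orb τ (A \ cyc σ x)).card := by
  rw [orb_mul_eq hσfix hτfix hxA, Finset.card_union_of_disjoint (orb_disjoint hτfix)]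

lemma en_mul (hσfix : ∀ y ∉ cyc σ x, σ y = y) (hτfix : ∀ y ∈ cyc σ x, τ y = y) :
    en (σ * τ) = en σ + en τ := by
  unfold en
  rw [← Finset.card_union_of_disjoint, ← Finset.filter_or]
  · congr 1
    ext y
    simp only [Finset.mem_filter, Finset.mem_univ, true_and]
    by_cases hc : y ∈ cyc σ x
    · rw [mul_apply_in hτfix hc, hτfix y hc]
      tauto
    · rw [mul_apply_out hσfix hτfix hc, hσfix y hc]
      tauto
  · rw [Finset.disjoint_left]
    intro y hy1 hy2
    have h1 : y ∈ cyc σ x := by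
      by_contra hc
      exact (Finset.mem_filter.1 hy1).2 (hσfix y hc)
    exact (Finset.mem_filter.1 hy2).2 (hτfix y h1)

lemma wt_mul (hσfix : ∀ y ∉ cyc σ x, σ y = y) (hτfix : ∀ y ∈ cyc σ x, τ y = y) :
    wt α (σ * τ) = wt α σ * wt α τ := by
  unfold wt
  rw [← Real.exp_add, en_mul hσfix hτfix]
  push_cast
  ring_nf

end Pair

/-- Restriction of `π` to an invariant set `C` (identity outside `C`). -/
def resIn (π : Equiv.Perm V) (C : Finset V) (hC : ∀ y : V, π y ∈ C ↔ y ∈ C) :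
    Equiv.Perm V where
  toFun y := if y ∈ C then π y else y
  invFun y := if y ∈ C then π.symm y else y
  left_inv y := by
    by_cases hy : y ∈ C
    · simp [hy, (hC y).2 hy]
    · simp [hy]
  right_inv y := by
    by_cases hy : y ∈ C
    · have h2 : π.symm y ∈ C := by rw [← hC (π.symm y)]; simpa
      simp [hy, h2]
    · simp [hy]

/-- Restriction of `π` to the complement of an invariant set `C`. -/
def resOut (π : Equiv.Perm V) (C : Finset V) (hC : ∀ y : V, π y ∈ C ↔ y ∈ C) :
    Equiv.Perm V where
  toFun y := if y ∈ C then y else π y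
  invFun y := if y ∈ C then y else π.symm y
  left_inv y := by
    by_cases hy : y ∈ C
    · simp [hy]
    · have h2 : π y ∉ C := fun h => hy ((hC y).1 h)
      simp [hy, h2]
  right_inv y := by
    by_cases hy : y ∈ C
    · simp [hy]
    · have h2 : π.symm y ∉ C := fun h => hy (by have h3 := (hC (π.symm y)).2 h; simpa using h3)
      simp [hy, h2]

lemma resIn_apply {π : Equiv.Perm V} {C : Finset V} {hC : ∀ y : V, π y ∈ C ↔ y ∈ C}
    {y : V} : resIn π C hC y = if y ∈ C then π y else y := rfl

lemma resOut_apply {π : Equiv.Perm V} {C : Finset V} {hC : ∀ y : V, π y ∈ C ↔ y ∈ C}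
    {y : V} : resOut π C hC y = if y ∈ C then y else π y := rfl

lemma resIn_mul_resOut (π : Equiv.Perm V) (C : Finset V)
    (hC : ∀ y : V, π y ∈ C ↔ y ∈ C) : resIn π C hC * resOut π C hC = π := by
  ext y
  by_cases hy : y ∈ C
  · simp [Equiv.Perm.mul_apply, resIn_apply, resOut_apply, hy]
  · have h2 : π y ∉ C := fun h => hy ((hC y).1 h)
    simp [Equiv.Perm.mul_apply, resIn_apply, resOut_apply, hy, h2]

lemma cyc_apply_mem (π : Equiv.Perm V) (x : V) :
    ∀ y : V, π y ∈ cyc π x ↔ y ∈ cyc π x := fun _ => apply_mem_cyc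

lemma cyc_resIn (π : Equiv.Perm V) (x : V) :
    cyc (resIn π (cyc π x) (cyc_apply_mem π x)) x = cyc π x :=
  cyc_eq_cyc fun i => iterate_agree (fun y hy => apply_mem_cyc.2 hy)
    (fun y hy => by rw [resIn_apply, if_pos hy]) (mem_cyc_self π x) i

/-- The condition defining the cycle/remainder decomposition at `x` in volume `U`. -/
def CycPair (G : SimpleGraph V) (U : Finset V) (x : V) (σ τ : Equiv.Perm V) : Prop :=
  IsGPerm G U σ ∧ (∀ y ∉ cyc σ x, σ y = y) ∧ IsGPerm G (U \ cyc σ x) τ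

lemma cycPair_of_gperm {π : Equiv.Perm V} (hπ : IsGPerm G U π) {x : V} (hx : x ∈ U) :
    CycPair G U x (resIn π (cyc π x) (cyc_apply_mem π x))
      (resOut π (cyc π x) (cyc_apply_mem π x)) := by
  have hCU : cyc π x ⊆ U := cyc_subset hπ hx
  refine ⟨⟨fun y hy => ?_, fun y => ?_⟩, fun y hy => ?_, ⟨fun y hy => ?_, fun y => ?_⟩⟩
  · rw [resIn_apply, if_neg (fun h => hy (hCU h))]
  · rw [resIn_apply]
    split
    · exact hπ.2 y
    · exact Or.inl rfl
  · rw [cyc_resIn] at hy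
    rw [resIn_apply, if_neg hy]
  · rw [cyc_resIn, Finset.mem_sdiff, not_and, not_not] at hy
    rw [resOut_apply]
    by_cases hc : y ∈ cyc π x
    · rw [if_pos hc]
    · rw [if_neg hc]
      by_cases hU : y ∈ U
      · exact absurd (hy hU) hc
      · exact hπ.1 y hU
  · rw [resOut_apply]
    split
    · exact Or.inl rfl
    · exact hπ.2 y

lemma gperm_of_cycPair {σ τ : Equiv.Perm V} {x : V} (h : CycPair G U x σ τ) :
    IsGPerm G U (σ * τ) := by
  obtain ⟨hσ, hσfix, hτ⟩ := h
  constructor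
  · intro y hy
    have hτy : τ y = y := hτ.1 y (fun hc => hy (Finset.mem_sdiff.1 hc).1)
    rw [Equiv.Perm.mul_apply, hτy, hσ.1 y hy]
  · intro y
    by_cases hc : y ∈ cyc σ x
    · rw [mul_apply_in (fun z hz => hτ.1 z (fun hm => (Finset.mem_sdiff.1 hm).2 hz)) hc]
      exact hσ.2 y
    · rw [mul_apply_out hσfix (fun z hz => hτ.1 z (fun hm => (Finset.mem_sdiff.1 hm).2 hz)) hc]
      exact hτ.2 y

lemma tau_fix_of_cycPair {σ τ : Equiv.Perm V} {x : V} (h : CycPair G U x σ τ) :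
    ∀ y ∈ cyc σ x, τ y = y :=
  fun z hz => h.2.2.1 z (fun hm => (Finset.mem_sdiff.1 hm).2 hz)

lemma resIn_cycPair {σ τ : Equiv.Perm V} {x : V} (h : CycPair G U x σ τ) :
    resIn (σ * τ) (cyc (σ * τ) x) (cyc_apply_mem _ x) = σ := by
  have hτfix := tau_fix_of_cycPair h
  have hc := cyc_mul h.2.1 hτfix
  ext y
  rw [resIn_apply, hc]
  by_cases hy : y ∈ cyc σ x
  · rw [if_pos hy, mul_apply_in hτfix hy]
  · rw [if_neg hy, h.2.1 y hy]

lemma resOut_cycPair {σ τ : Equiv.Perm V} {x : V} (h : CycPair G U x σ τ) :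
    resOut (σ * τ) (cyc (σ * τ) x) (cyc_apply_mem _ x) = τ := by
  have hτfix := tau_fix_of_cycPair h
  have hc := cyc_mul h.2.1 hτfix
  ext y
  rw [resOut_apply, hc]
  by_cases hy : y ∈ cyc σ x
  · rw [if_pos hy, hτfix y hy]
  · rw [if_neg hy, mul_apply_out h.2.1 hτfix hy]

lemma wt_cycPair {σ τ : Equiv.Perm V} {x : V} (h : CycPair G U x σ τ) :
    wt α (σ * τ) = wt α σ * wt α τ :=
  wt_mul h.2.1 (tau_fix_of_cycPair h)

/-- Resummation: decompose a permutation on `U` into the cycle through `x`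
and the rest, a permutation on the complement of the cycle. -/
lemma resum (x : V) (hx : x ∈ U) (F : Equiv.Perm V → ℝ) :
    gsum G α U F = ∑ σ : Equiv.Perm V, ∑ τ : Equiv.Perm V,
      if CycPair G U x σ τ then wt α σ * wt α τ * F (σ * τ) else 0 := by
  have hL : gsum G α U F
      = ∑ π ∈ Finset.univ.filter (fun π => IsGPerm G U π), wt α π * F π := by
    unfold gsum; rw [Finset.sum_filter]
  have hR : (∑ σ : Equiv.Perm V, ∑ τ : Equiv.Perm V,
        if CycPair G U x σ τ then wt α σ * wt α τ * F (σ * τ) else 0)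
      = ∑ p ∈ (Finset.univ ×ˢ Finset.univ).filter
          (fun p : Equiv.Perm V × Equiv.Perm V => CycPair G U x p.1 p.2),
          wt α p.1 * wt α p.2 * F (p.1 * p.2) := by
    rw [Finset.sum_filter, Finset.sum_product]
  rw [hL, hR]
  refine Finset.sum_bij'
    (fun π _ => (resIn π (cyc π x) (cyc_apply_mem π x),
                 resOut π (cyc π x) (cyc_apply_mem π x)))
    (fun p _ => p.1 * p.2) ?_ ?_ ?_ ?_ ?_
  · intro π hπ
    simp only [Finset.mem_filter, Finset.mem_univ, true_and] at hπ ⊢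
    exact ⟨Finset.mem_product.2 ⟨Finset.mem_univ _, Finset.mem_univ _⟩,
      cycPair_of_gperm hπ hx⟩
  · intro p hp
    simp only [Finset.mem_filter, Finset.mem_univ, true_and] at hp ⊢
    exact gperm_of_cycPair hp.2
  · intro π hπ
    exact resIn_mul_resOut π (cyc π x) (cyc_apply_mem π x)
  · intro p hp
    simp only [Finset.mem_filter] at hp
    exact Prod.ext (resIn_cycPair hp.2) (resOut_cycPair hp.2)
  · intro π hπ
    simp only [Finset.mem_filter, Finset.mem_univ, true_and] at hπ
    have hpair := cycPair_of_gperm hπ hx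
    rw [← wt_cycPair hpair, resIn_mul_resOut]

lemma gsum_zero : gsum G α U (fun _ => (0:ℝ)) = 0 := by
  unfold gsum
  exact Finset.sum_eq_zero fun π _ => by split <;> simp

lemma gsum_const (c : ℝ) : gsum G α U (fun _ => c) = c * Z G α U := by
  unfold gsum Z
  rw [Finset.mul_sum]
  refine Finset.sum_congr rfl fun π _ => ?_
  by_cases hπ : IsGPerm G U π <;> simp [hπ, mul_comm]

lemma gsum_eq_PU_mul_Z (S : Equiv.Perm V → Prop) :
    gsum G α U (fun π => if S π then (1:ℝ) else 0) = PU G α U S * Z G α U := by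
  unfold PU EU
  rw [div_mul_cancel₀ _ (Z_pos G α U).ne']

lemma PU_le_one (S : Equiv.Perm V → Prop) : PU G α U S ≤ 1 := by
  unfold PU EU
  rw [div_le_one (Z_pos G α U)]
  calc gsum G α U (fun π => if S π then (1:ℝ) else 0)
      ≤ gsum G α U (fun _ => 1) := gsum_mono fun π _ => by split <;> norm_num
    _ = Z G α U := gsum_one

lemma inner_tau_gsum (x : V) (σ : Equiv.Perm V) (f : Equiv.Perm V → ℝ) :
    (∑ τ : Equiv.Perm V, if CycPair G U x σ τ then wt α σ * wt α τ * f τ else 0)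
      = if IsGPerm G U σ ∧ (∀ y ∉ cyc σ x, σ y = y)
        then wt α σ * gsum G α (U \ cyc σ x) f else 0 := by
  by_cases h : IsGPerm G U σ ∧ (∀ y ∉ cyc σ x, σ y = y)
  · rw [if_pos h]
    unfold gsum
    rw [Finset.mul_sum]
    refine Finset.sum_congr rfl fun τ _ => ?_
    by_cases hτ : IsGPerm G (U \ cyc σ x) τ
    · rw [if_pos ⟨h.1, h.2, hτ⟩, if_pos hτ, mul_assoc]
    · rw [if_neg (fun hc : CycPair G U x σ τ => hτ hc.2.2), if_neg hτ, mul_zero]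
  · rw [if_neg h]
    exact Finset.sum_eq_zero fun τ _ => if_neg (fun hc => h ⟨hc.1, hc.2.1⟩)

/-- Resummation for a statistic of the cycle through `x`, capped at `ℓ`. -/
lemma gsum_cyc_stat (x : V) (hx : x ∈ U) (w : ℕ → ℝ) :
    gsum G α U (fun π => w (cyc π x).card)
      = ∑ σ : Equiv.Perm V,
          if IsGPerm G U σ ∧ (∀ y ∉ cyc σ x, σ y = y)
          then wt α σ * (w (cyc σ x).card * Z G α (U \ cyc σ x)) else 0 := by
  rw [resum x hx]
  refine Finset.sum_congr rfl fun σ _ => ?_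
  have h1 : (∑ τ : Equiv.Perm V,
        if CycPair G U x σ τ then wt α σ * wt α τ * w (cyc (σ * τ) x).card else 0)
      = ∑ τ : Equiv.Perm V,
        if CycPair G U x σ τ then wt α σ * wt α τ * w (cyc σ x).card else 0 := by
    refine Finset.sum_congr rfl fun τ _ => ?_
    by_cases hc : CycPair G U x σ τ
    · rw [if_pos hc, if_pos hc, cyc_mul hc.2.1 (tau_fix_of_cycPair hc)]
    · rw [if_neg hc, if_neg hc]
  rw [h1, inner_tau_gsum x σ (fun _ => w (cyc σ x).card)]
  by_cases h : IsGPerm G U σ ∧ (∀ y ∉ cyc σ x, σ y = y)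
  · rw [if_pos h, if_pos h, gsum_const]
  · rw [if_neg h, if_neg h]

lemma sum_telescope_aux (N : ℕ) (p g : ℕ → ℝ) :
    ∑ k ∈ Finset.range (N+1), p k * g k
      = g 0 * (∑ k ∈ Finset.range (N+1), p k)
        + ∑ j ∈ Finset.range N, (g (j+1) - g j)
            * ∑ k ∈ Finset.range (N+1), (if j+1 ≤ k then p k else 0) := by
  have hg : ∀ k : ℕ, g k = g 0 + ∑ j ∈ Finset.range k, (g (j+1) - g j) := by
    intro k
    rw [Finset.sum_range_sub g k]
    ring
  have step1 : ∑ k ∈ Finset.range (N+1), p k * g k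
      = ∑ k ∈ Finset.range (N+1),
          (p k * g 0 + ∑ j ∈ Finset.range k, p k * (g (j+1) - g j)) := by
    refine Finset.sum_congr rfl fun k _ => ?_
    rw [hg k, mul_add, Finset.mul_sum]
  have step2 : ∀ k ∈ Finset.range (N+1),
      (∑ j ∈ Finset.range k, p k * (g (j+1) - g j))
        = ∑ j ∈ Finset.range N, (if j + 1 ≤ k then p k * (g (j+1) - g j) else 0) := by
    intro k hk
    rw [← Finset.sum_filter]
    refine (Finset.sum_congr ?_ fun _ _ => rfl)
    ext j
    simp only [Finset.mem_filter, Finset.mem_range] at *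
    omega
  rw [step1, Finset.sum_add_distrib]
  congr 1
  · rw [Finset.mul_sum]
    exact Finset.sum_congr rfl fun k _ => mul_comm _ _
  · rw [Finset.sum_congr rfl step2, Finset.sum_comm]
    refine Finset.sum_congr rfl fun j _ => ?_
    rw [Finset.mul_sum]
    refine Finset.sum_congr rfl fun k _ => ?_
    by_cases h : j + 1 ≤ k
    · rw [if_pos h, if_pos h]; ring
    · rw [if_neg h, if_neg h, mul_zero]

lemma abel_compare (N : ℕ) (p e g : ℕ → ℝ)
    (hg : ∀ j, j < N → g j ≤ g (j+1))
    (htail : ∀ m, 1 ≤ m → m ≤ N →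
      (∑ k ∈ Finset.range (N+1), if m ≤ k then p k else 0)
        ≤ ∑ k ∈ Finset.range (N+1), if m ≤ k then e k else 0)
    (htot : ∑ k ∈ Finset.range (N+1), p k = ∑ k ∈ Finset.range (N+1), e k) :
    ∑ k ∈ Finset.range (N+1), p k * g k ≤ ∑ k ∈ Finset.range (N+1), e k * g k := by
  rw [sum_telescope_aux N p g, sum_telescope_aux N e g, htot]
  refine add_le_add le_rfl (Finset.sum_le_sum fun j hj => ?_)
  have hjN := Finset.mem_range.1 hj
  exact mul_le_mul_of_nonneg_left (htail (j+1) (Nat.succ_le_succ (Nat.zero_le j)) hjN)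
    (sub_nonneg.2 (hg j hjN))

section Prob

open MeasureTheory ProbabilityTheory

variable {Ω' : Type*} [MeasurableSpace Ω'] {ν : Measure Ω'} [IsProbabilityMeasure ν]

lemma partition_sum (X : Ω' → ℕ) (hX : Measurable X) (ℓ : ℕ)
    (T : Set Ω') (hT : MeasurableSet T) :
    ∑ k ∈ Finset.range (ℓ+1), ν (T ∩ {ω | min (X ω) ℓ = k}) = ν T := by
  have hg : Measurable (fun ω => min (X ω) ℓ) :=
    (Measurable.of_discrete (f := fun j => min j ℓ)).comp hX
  have hmE : ∀ k : ℕ, MeasurableSet {ω | min (X ω) ℓ = k} := fun k =>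
    hg (MeasurableSet.of_discrete (s := {k}))
  have hd : (↑(Finset.range (ℓ+1)) : Set ℕ).PairwiseDisjoint
      (fun k => T ∩ {ω | min (X ω) ℓ = k}) := by
    intro a _ b _ hab
    refine Set.disjoint_left.2 fun ω hωa hωb => hab ?_
    rw [← hωa.2, ← hωb.2]
  have hcover : T = ⋃ k ∈ Finset.range (ℓ+1), (T ∩ {ω | min (X ω) ℓ = k}) := by
    ext ω
    simp only [Set.mem_iUnion, Set.mem_inter_iff, Set.mem_setOf_eq, Finset.mem_range]
    constructor
    · intro hω
      exact ⟨min (X ω) ℓ, by omega, hω, rfl⟩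
    · rintro ⟨k, _, hω, _⟩
      exact hω
  rw [← measure_biUnion_finset hd (fun k _ => hT.inter (hmE k)), ← hcover]

lemma sum_decomp (S X : Ω' → ℕ) (hS : Measurable S) (hX : Measurable X)
    (hind : IndepFun S X ν) (ℓ : ℕ) :
    (ν {ω | ℓ ≤ S ω + X ω}).toReal
      = ∑ k ∈ Finset.range (ℓ+1),
          (ν {ω | min (X ω) ℓ = k}).toReal * (ν {ω | ℓ - k ≤ S ω}).toReal := by
  have hT : MeasurableSet {ω | ℓ ≤ S ω + X ω} :=
    (hS.add hX) (MeasurableSet.of_discrete (s := {j | ℓ ≤ j}))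
  have h1 : ν {ω | ℓ ≤ S ω + X ω}
      = ∑ k ∈ Finset.range (ℓ+1),
          ν ({ω | ℓ ≤ S ω + X ω} ∩ {ω | min (X ω) ℓ = k}) :=
    (partition_sum X hX ℓ _ hT).symm
  have h2 : ∀ k ∈ Finset.range (ℓ+1),
      ν ({ω | ℓ ≤ S ω + X ω} ∩ {ω | min (X ω) ℓ = k})
        = ν {ω | ℓ - k ≤ S ω} * ν {ω | min (X ω) ℓ = k} := by
    intro k _
    have hset : {ω | ℓ ≤ S ω + X ω} ∩ {ω | min (X ω) ℓ = k}
        = (S ⁻¹' {j | ℓ - k ≤ j}) ∩ (X ⁻¹' {j | min j ℓ = k}) := by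
      ext ω
      simp only [Set.mem_inter_iff, Set.mem_setOf_eq, Set.mem_preimage]
      omega
    rw [hset, hind.measure_inter_preimage_eq_mul _ _
      (MeasurableSet.of_discrete) (MeasurableSet.of_discrete)]
    rfl
  rw [h1, Finset.sum_congr rfl h2, ENNReal.toReal_sum
    (fun k _ => ENNReal.mul_ne_top (measure_ne_top ν _) (measure_ne_top ν _))]
  exact Finset.sum_congr rfl fun k _ => by
    rw [ENNReal.toReal_mul, mul_comm]

lemma tail_e (X : Ω' → ℕ) (hX : Measurable X) {ℓ m : ℕ} (hm : m ≤ ℓ) :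
    (∑ k ∈ Finset.range (ℓ+1),
        if m ≤ k then (ν {ω | min (X ω) ℓ = k}).toReal else 0)
      = (ν {ω | m ≤ X ω}).toReal := by
  have hT : MeasurableSet {ω | m ≤ X ω} :=
    hX (MeasurableSet.of_discrete (s := {j | m ≤ j}))
  have h1 := partition_sum (ν := ν) X hX ℓ _ hT
  have h2 : ∀ k ∈ Finset.range (ℓ+1),
      ν ({ω | m ≤ X ω} ∩ {ω | min (X ω) ℓ = k})
        = if m ≤ k then ν {ω | min (X ω) ℓ = k} else 0 := by
    intro k _
    by_cases hk : m ≤ k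
    · rw [if_pos hk]
      congr 1
      ext ω
      simp only [Set.mem_inter_iff, Set.mem_setOf_eq]
      constructor
      · exact And.right
      · intro h
        exact ⟨by omega, h⟩
    · rw [if_neg hk]
      have hemp : {ω | m ≤ X ω} ∩ {ω | min (X ω) ℓ = k} = (∅ : Set Ω') := by
        ext ω
        simp only [Set.mem_inter_iff, Set.mem_setOf_eq, Set.mem_empty_iff_false,
          iff_false, not_and]
        omega
      rw [hemp, measure_empty]
  rw [Finset.sum_congr rfl h2] at h1
  rw [← h1, ENNReal.toReal_sum (fun k _ => by
    split
    · exact measure_ne_top ν _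
    · exact ENNReal.zero_ne_top)]
  exact Finset.sum_congr rfl fun k _ => by split <;> simp

end Prob

lemma regroup (x : V) (hx : x ∈ U) (ℓ : ℕ) (u : ℕ → ℝ) :
    (∑ k ∈ Finset.range (ℓ+1), u k *
        gsum G α U (fun π => if min (cyc π x).card ℓ = k then (1:ℝ) else 0))
      = ∑ σ : Equiv.Perm V,
          if IsGPerm G U σ ∧ (∀ y ∉ cyc σ x, σ y = y)
          then wt α σ * (u (min (cyc σ x).card ℓ) * Z G α (U \ cyc σ x)) else 0 := by
  have hq : ∀ k : ℕ, gsum G α U (fun π => if min (cyc π x).card ℓ = k then (1:ℝ) else 0)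
      = ∑ σ : Equiv.Perm V,
          if IsGPerm G U σ ∧ (∀ y ∉ cyc σ x, σ y = y)
          then wt α σ * ((if min (cyc σ x).card ℓ = k then (1:ℝ) else 0)
            * Z G α (U \ cyc σ x)) else 0 :=
    fun k => gsum_cyc_stat x hx (fun c => if min c ℓ = k then (1:ℝ) else 0)
  calc (∑ k ∈ Finset.range (ℓ+1), u k *
          gsum G α U (fun π => if min (cyc π x).card ℓ = k then (1:ℝ) else 0))
      = ∑ k ∈ Finset.range (ℓ+1), ∑ σ : Equiv.Perm V,
          if IsGPerm G U σ ∧ (∀ y ∉ cyc σ x, σ y = y)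
          then u k * (wt α σ * ((if min (cyc σ x).card ℓ = k then (1:ℝ) else 0)
            * Z G α (U \ cyc σ x))) else 0 := by
        refine Finset.sum_congr rfl fun k _ => ?_
        rw [hq k, Finset.mul_sum]
        refine Finset.sum_congr rfl fun σ _ => ?_
        by_cases h : IsGPerm G U σ ∧ (∀ y ∉ cyc σ x, σ y = y)
        · rw [if_pos h, if_pos h]
        · rw [if_neg h, if_neg h, mul_zero]
    _ = ∑ σ : Equiv.Perm V, ∑ k ∈ Finset.range (ℓ+1),
          if IsGPerm G U σ ∧ (∀ y ∉ cyc σ x, σ y = y)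
          then u k * (wt α σ * ((if min (cyc σ x).card ℓ = k then (1:ℝ) else 0)
            * Z G α (U \ cyc σ x))) else 0 := Finset.sum_comm
    _ = ∑ σ : Equiv.Perm V,
          if IsGPerm G U σ ∧ (∀ y ∉ cyc σ x, σ y = y)
          then wt α σ * (u (min (cyc σ x).card ℓ) * Z G α (U \ cyc σ x)) else 0 := by
        refine Finset.sum_congr rfl fun σ _ => ?_
        by_cases h : IsGPerm G U σ ∧ (∀ y ∉ cyc σ x, σ y = y)
        · rw [if_pos h]
          have hterm : ∀ k ∈ Finset.range (ℓ+1),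
              (if IsGPerm G U σ ∧ (∀ y ∉ cyc σ x, σ y = y)
               then u k * (wt α σ * ((if min (cyc σ x).card ℓ = k then (1:ℝ) else 0)
                 * Z G α (U \ cyc σ x))) else 0)
                = if min (cyc σ x).card ℓ = k
                  then u k * (wt α σ * Z G α (U \ cyc σ x)) else 0 := by
            intro k _
            rw [if_pos h]
            by_cases h2 : min (cyc σ x).card ℓ = k
            · rw [if_pos h2, if_pos h2]; ring
            · rw [if_neg h2, if_neg h2]; ring
          rw [Finset.sum_congr rfl hterm, Finset.sum_ite_eq,
            if_pos (Finset.mem_range.2 (by omega))]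
          ring
        · rw [if_neg h]
          exact Finset.sum_eq_zero fun k _ => if_neg h

lemma tail_q (x : V) {ℓ m : ℕ} (hm : m ≤ ℓ) :
    (∑ k ∈ Finset.range (ℓ+1),
        if m ≤ k then
          gsum G α U (fun π => if min (cyc π x).card ℓ = k then (1:ℝ) else 0) else 0)
      = gsum G α U (fun π => if m ≤ (cyc π x).card then (1:ℝ) else 0) := by
  have h1 : ∀ k ∈ Finset.range (ℓ+1),
      (if m ≤ k then
          gsum G α U (fun π => if min (cyc π x).card ℓ = k then (1:ℝ) else 0) else 0)
        = gsum G α U (fun π =>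
            if m ≤ k then (if min (cyc π x).card ℓ = k then (1:ℝ) else 0) else 0) := by
    intro k _
    by_cases h : m ≤ k
    · rw [if_pos h]
      exact gsum_congr fun π _ => (if_pos h).symm
    · rw [if_neg h, gsum_congr (g := fun _ => (0:ℝ)) (fun π _ => if_neg h), gsum_zero]
  rw [Finset.sum_congr rfl h1, ← gsum_finset_sum]
  refine gsum_congr fun π _ => ?_
  have h2 : ∀ k ∈ Finset.range (ℓ+1),
      (if m ≤ k then (if min (cyc π x).card ℓ = k then (1:ℝ) else 0) else 0)
        = if min (cyc π x).card ℓ = k then (if m ≤ k then (1:ℝ) else 0) else 0 := by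
    intro k _
    by_cases h : m ≤ k <;> by_cases h2 : min (cyc π x).card ℓ = k <;> simp [h, h2]
  rw [Finset.sum_congr rfl h2, Finset.sum_ite_eq,
    if_pos (Finset.mem_range.2 (by omega))]
  by_cases h : m ≤ (cyc π x).card
  · rw [if_pos (by omega : m ≤ min (cyc π x).card ℓ), if_pos h]
  · rw [if_neg (by omega : ¬ m ≤ min (cyc π x).card ℓ), if_neg h]

/-- The random permutation model on `(V,E)` has cycle length bounded by the
integer-valued random variable `ξ`: uniformly in finite subvolumes `U` and
points `x ∈ U`, the number of vertices of the cycle through `x` is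
stochastically dominated by `ξ`. -/
def CycleBounded (G : SimpleGraph V) (α : ℝ) {Ω' : Type*} [MeasurableSpace Ω']
    (ν : Measure Ω') (ξ : Ω' → ℕ) : Prop :=
  ∀ U : Finset V, ∀ x ∈ U, ∀ ℓ : ℕ, 1 ≤ ℓ →
    PU G α U (fun π => ℓ ≤ (cyc π x).card) ≤ (ν {ω | ℓ ≤ ξ ω}).toReal

/-- if the model has cycle length bounded by `ξ` and
`(ξ_n)` are independent copies of `ξ`, then for every `A ⊆ V` and `ℓ ∈ ℕ`,
`P_V(|Or(A)| ≥ ℓ) ≤ P(Σ_{i=1}^{|A|} ξ_i ≥ ℓ)`. -/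
theorem orbit_stochastic_bound (G : SimpleGraph V) (α : ℝ)
    {Ω' : Type*} [MeasurableSpace Ω'] (ν : Measure Ω') [IsProbabilityMeasure ν]
    (ξ : Ω' → ℕ) (hξ : Measurable ξ) (hbound : CycleBounded G α ν ξ)
    (ξs : ℕ → Ω' → ℕ) (hmeas : ∀ n, Measurable (ξs n))
    (hindep : iIndepFun ξs ν)
    (hcopies : ∀ n, IdentDistrib (ξs n) ξ ν ν) :
    ∀ (A : Finset V) (ℓ : ℕ),
      PU G α Finset.univ (fun π => ℓ ≤ (orb π A).card) ≤
        (ν {ω | ℓ ≤ ∑ i ∈ Finset.range A.card, ξs i ω}).toReal := by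
  intro A₀ ℓ₀
  let rhs : ℕ → ℕ → ℝ := fun ℓ n => (ν {ω | ℓ ≤ ∑ i ∈ Finset.range n, ξs i ω}).toReal
  have hrhs0 : ∀ n, rhs 0 n = 1 := by
    intro n
    have huniv : {ω | 0 ≤ ∑ i ∈ Finset.range n, ξs i ω} = Set.univ := by
      ext ω; simp
    simp only [rhs, huniv, measure_univ, ENNReal.toReal_one]
  have hrhs_anti : ∀ n ℓ ℓ', ℓ ≤ ℓ' → rhs ℓ' n ≤ rhs ℓ n := by
    intro n ℓ ℓ' h
    refine ENNReal.toReal_mono (measure_ne_top ν _) (measure_mono (fun ω hω => ?_))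
    simp only [Set.mem_setOf_eq] at hω ⊢
    omega
  have hrhs_mono_n : ∀ ℓ n n', n ≤ n' → rhs ℓ n ≤ rhs ℓ n' := by
    intro ℓ n n' h
    refine ENNReal.toReal_mono (measure_ne_top ν _) (measure_mono (fun ω hω => ?_))
    simp only [Set.mem_setOf_eq] at hω ⊢
    exact le_trans hω (Finset.sum_le_sum_of_subset (Finset.range_subset_range.2 h))
  have hrhs_nonneg : ∀ ℓ n, 0 ≤ rhs ℓ n := fun _ _ => ENNReal.toReal_nonneg
  suffices H : ∀ n (A U : Finset V) (ℓ : ℕ), A ⊆ U → A.card ≤ n →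
      PU G α U (fun π => ℓ ≤ (orb π A).card) ≤ rhs ℓ n by
    exact H A₀.card A₀ Finset.univ ℓ₀ (Finset.subset_univ _) le_rfl
  intro n
  induction n with
  | zero =>
      intro A U ℓ hAU hcard
      have hA : A = ∅ := Finset.card_eq_zero.1 (Nat.le_zero.1 hcard)
      subst hA
      rcases Nat.eq_zero_or_pos ℓ with rfl | hℓ
      · rw [PU_eq_one (fun π _ => Nat.zero_le _)]
        rw [hrhs0 0]
      · have horb : ∀ π : Equiv.Perm V, orb π (∅ : Finset V) = ∅ := fun π => by
          ext y; simp [mem_orb]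
        rw [PU_eq_zero (fun π _ h => by rw [horb π] at h; simp at h; omega)]
        exact hrhs_nonneg _ _
  | succ n IH =>
      intro A U ℓ hAU hcard
      rcases Nat.lt_or_ge A.card (n+1) with hlt | hge
      · exact le_trans (IH A U ℓ hAU (by omega)) (hrhs_mono_n ℓ n (n+1) (by omega))
      have hAcard : A.card = n + 1 := le_antisymm hcard hge
      obtain ⟨x, hxA⟩ := Finset.card_pos.1 (show 0 < A.card by omega)
      have hxU : x ∈ U := hAU hxA
      rcases Nat.eq_zero_or_pos ℓ with rfl | hℓ
      · rw [PU_eq_one (fun π _ => Nat.zero_le _), hrhs0]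
      -- notation
      set ZU := Z G α U with hZU
      have hZpos : (0:ℝ) < ZU := Z_pos G α U
      have hconv : ∀ (U' : Finset V) (f : Equiv.Perm V → ℕ) (c : ℕ),
          gsum G α U' (fun τ => if c ≤ f τ then (1:ℝ) else 0)
            = PU G α U' (fun τ => c ≤ f τ) * Z G α U' := by
        intro U' f c
        rw [← gsum_eq_PU_mul_Z]
        exact gsum_congr fun τ _ => by congr
      let q : ℕ → ℝ := fun k =>
        gsum G α U (fun π => if min (cyc π x).card ℓ = k then (1:ℝ) else 0)
      let e : ℕ → ℝ := fun k => (ν {ω | min (ξs n ω) ℓ = k}).toReal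
      let g : ℕ → ℝ := fun k => rhs (ℓ - k) n
      -- Step 1-3: decomposition of the Gibbs sum
      have step3 : gsum G α U (fun π => if ℓ ≤ (orb π A).card then (1:ℝ) else 0)
          = ∑ σ : Equiv.Perm V,
              if IsGPerm G U σ ∧ (∀ y ∉ cyc σ x, σ y = y)
              then wt α σ * gsum G α (U \ cyc σ x)
                (fun τ => if ℓ - min (cyc σ x).card ℓ ≤ (orb τ (A \ cyc σ x)).card
                  then (1:ℝ) else 0) else 0 := by
        rw [resum x hxU]
        refine Finset.sum_congr rfl fun σ _ => ?_
        have hinner : (∑ τ : Equiv.Perm V,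
            if CycPair G U x σ τ
            then wt α σ * wt α τ * (if ℓ ≤ (orb (σ * τ) A).card then (1:ℝ) else 0) else 0)
            = ∑ τ : Equiv.Perm V,
            if CycPair G U x σ τ
            then wt α σ * wt α τ *
              (if ℓ - min (cyc σ x).card ℓ ≤ (orb τ (A \ cyc σ x)).card
                then (1:ℝ) else 0) else 0 := by
          refine Finset.sum_congr rfl fun τ _ => ?_
          by_cases hc : CycPair G U x σ τ
          · rw [if_pos hc, if_pos hc,
              card_orb_mul hc.2.1 (tau_fix_of_cycPair hc) hxA]
            congr 1
            exact if_congr (by omega) rfl rfl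
          · rw [if_neg hc, if_neg hc]
        rw [hinner, inner_tau_gsum]
      -- Step 4: bound using the induction hypothesis
      have step4 : (∑ σ : Equiv.Perm V,
              if IsGPerm G U σ ∧ (∀ y ∉ cyc σ x, σ y = y)
              then wt α σ * gsum G α (U \ cyc σ x)
                (fun τ => if ℓ - min (cyc σ x).card ℓ ≤ (orb τ (A \ cyc σ x)).card
                  then (1:ℝ) else 0) else 0)
          ≤ ∑ σ : Equiv.Perm V,
              if IsGPerm G U σ ∧ (∀ y ∉ cyc σ x, σ y = y)
              then wt α σ * (g (min (cyc σ x).card ℓ) * Z G α (U \ cyc σ x)) else 0 := by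
        refine Finset.sum_le_sum fun σ _ => ?_
        by_cases h : IsGPerm G U σ ∧ (∀ y ∉ cyc σ x, σ y = y)
        · rw [if_pos h, if_pos h]
          refine mul_le_mul_of_nonneg_left ?_ (wt_pos α σ).le
          rw [hconv (U \ cyc σ x) (fun τ => (orb τ (A \ cyc σ x)).card)
            (ℓ - min (cyc σ x).card ℓ)]
          refine mul_le_mul_of_nonneg_right ?_ (Z_pos G α (U \ cyc σ x)).le
          have hsub : A \ cyc σ x ⊆ U \ cyc σ x := fun y hy =>
            Finset.mem_sdiff.2 ⟨hAU (Finset.mem_sdiff.1 hy).1, (Finset.mem_sdiff.1 hy).2⟩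
          have hsub2 : A \ cyc σ x ⊆ A.erase x := fun y hy =>
            Finset.mem_erase.2 ⟨fun hyx => (Finset.mem_sdiff.1 hy).2
              (hyx ▸ mem_cyc_self σ x), (Finset.mem_sdiff.1 hy).1⟩
          have hcard2 : (A \ cyc σ x).card ≤ n := by
            have := Finset.card_le_card hsub2
            rw [Finset.card_erase_of_mem hxA] at this
            omega
          exact IH (A \ cyc σ x) (U \ cyc σ x) (ℓ - min (cyc σ x).card ℓ) hsub hcard2
        · rw [if_neg h, if_neg h]
      -- Step 5: regroup by cycle length
      have step5 : (∑ σ : Equiv.Perm V,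
              if IsGPerm G U σ ∧ (∀ y ∉ cyc σ x, σ y = y)
              then wt α σ * (g (min (cyc σ x).card ℓ) * Z G α (U \ cyc σ x)) else 0)
          = ∑ k ∈ Finset.range (ℓ+1), q k * g k := by
        rw [← regroup x hxU ℓ g]
        exact Finset.sum_congr rfl fun k _ => mul_comm _ _
      -- probability side: independence and decomposition
      have hmeasS : Measurable (fun ω => ∑ i ∈ Finset.range n, ξs i ω) :=
        Finset.measurable_sum (Finset.range n) (fun i _ => hmeas i)
      have hindSX : IndepFun (fun ω => ∑ i ∈ Finset.range n, ξs i ω) (ξs n) ν := by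
        have h := hindep.indepFun_sum_range_succ hmeas n
        have hfun : (∑ j ∈ Finset.range n, ξs j)
            = (fun ω => ∑ i ∈ Finset.range n, ξs i ω) := by
          funext ω
          exact Finset.sum_apply ω (Finset.range n) ξs
        rwa [hfun] at h
      have hdecomp : rhs ℓ (n+1) = ∑ k ∈ Finset.range (ℓ+1), e k * g k := by
        have hset : {ω | ℓ ≤ ∑ i ∈ Finset.range (n+1), ξs i ω}
            = {ω | ℓ ≤ (∑ i ∈ Finset.range n, ξs i ω) + ξs n ω} := by
          ext ω
          simp [Finset.sum_range_succ]
        calc rhs ℓ (n+1)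
            = (ν {ω | ℓ ≤ (∑ i ∈ Finset.range n, ξs i ω) + ξs n ω}).toReal := by
              rw [show rhs ℓ (n+1)
                = (ν {ω | ℓ ≤ ∑ i ∈ Finset.range (n+1), ξs i ω}).toReal from rfl, hset]
          _ = ∑ k ∈ Finset.range (ℓ+1), e k * g k :=
              sum_decomp _ (ξs n) hmeasS (hmeas n) hindSX ℓ
      -- tails of e
      have hcopy : ∀ m : ℕ, ν {ω | m ≤ ξs n ω} = ν {ω | m ≤ ξ ω} := fun m =>
        (hcopies n).measure_mem_eq (MeasurableSet.of_discrete (s := {j | m ≤ j}))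
      -- Step 6: Abel comparison
      have step6 : (∑ k ∈ Finset.range (ℓ+1), q k * g k)
          ≤ ∑ k ∈ Finset.range (ℓ+1), (e k * ZU) * g k := by
        refine abel_compare ℓ q (fun k => e k * ZU) g ?_ ?_ ?_
        · intro j hj
          exact hrhs_anti n (ℓ - (j+1)) (ℓ - j) (by omega)
        · intro m hm1 hmℓ
          have hL : (∑ k ∈ Finset.range (ℓ+1), if m ≤ k then q k else 0)
              = gsum G α U (fun π => if m ≤ (cyc π x).card then (1:ℝ) else 0) :=
            tail_q x hmℓ
          have hR : (∑ k ∈ Finset.range (ℓ+1), if m ≤ k then e k * ZU else 0)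
              = (ν {ω | m ≤ ξ ω}).toReal * ZU := by
            have h1 : ∀ k ∈ Finset.range (ℓ+1),
                (if m ≤ k then e k * ZU else 0) = (if m ≤ k then e k else 0) * ZU := by
              intro k _
              by_cases h : m ≤ k
              · rw [if_pos h, if_pos h]
              · rw [if_neg h, if_neg h, zero_mul]
            rw [Finset.sum_congr rfl h1, ← Finset.sum_mul, tail_e (ξs n) (hmeas n) hmℓ,
              hcopy m]
          rw [hL, hR, hconv U (fun π => (cyc π x).card) m]
          exact mul_le_mul_of_nonneg_right (hbound U x hxU m hm1) hZpos.le
        · have hLtot : (∑ k ∈ Finset.range (ℓ+1), q k) = ZU := by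
            have h0 : (∑ k ∈ Finset.range (ℓ+1), q k)
                = ∑ k ∈ Finset.range (ℓ+1), if 0 ≤ k then q k else 0 := by
              refine Finset.sum_congr rfl fun k _ => ?_
              rw [if_pos (Nat.zero_le k)]
            rw [h0, tail_q x (Nat.zero_le ℓ),
              gsum_congr (g := fun _ => (1:ℝ)) (fun π _ => if_pos (Nat.zero_le _)),
              gsum_one]
          have hRtot : (∑ k ∈ Finset.range (ℓ+1), e k * ZU) = ZU := by
            rw [← Finset.sum_mul]
            have h0 : (∑ k ∈ Finset.range (ℓ+1), e k)
                = ∑ k ∈ Finset.range (ℓ+1), if 0 ≤ k then e k else 0 := by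
              refine Finset.sum_congr rfl fun k _ => ?_
              rw [if_pos (Nat.zero_le k)]
            rw [h0, tail_e (ξs n) (hmeas n) (Nat.zero_le ℓ)]
            have huniv : {ω | 0 ≤ ξs n ω} = Set.univ := by ext ω; simp
            rw [huniv, measure_univ, ENNReal.toReal_one, one_mul]
          rw [hLtot, hRtot]
      -- Step 7: identify the right-hand side
      have step7 : (∑ k ∈ Finset.range (ℓ+1), (e k * ZU) * g k)
          = rhs ℓ (n+1) * ZU := by
        rw [hdecomp, Finset.sum_mul]
        exact Finset.sum_congr rfl fun k _ => by ring
      -- conclusion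
      have hfinal : gsum G α U (fun π => if ℓ ≤ (orb π A).card then (1:ℝ) else 0)
          ≤ rhs ℓ (n+1) * ZU := by
        rw [step3]
        exact le_trans step4 (le_trans (le_of_eq step5) (le_trans step6 (le_of_eq step7)))
      have hPU : PU G α U (fun π => ℓ ≤ (orb π A).card)
          = gsum G α U (fun π => if ℓ ≤ (orb π A).card then (1:ℝ) else 0) / ZU := by
        unfold PU EU
        congr 1
        exact gsum_congr fun π _ => by congr
      rw [hPU, div_le_iff₀ hZpos]
      exact hfinal

end SRP
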